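/- Let (L, A, ω, {{-,-}}) be a double Lie algebroid with zero anchor. Then on the quotient L/[A,L], the products induced by •_l and •_r (where X •_l Y = m({{X,Y}}_l) and X •_r Y = -m({{X,Y}}_r)) are opposite to each other: X •_r Y ≡ Y •_l X mod [A,L]. Consequently the bracket {X,Y} = m({{X,Y}}) = X •_l Y - X •_r Y induces on L/[A,L] the commutator Lie bracket of the associative product induced by •_l. -/

import Mathlib

/-! By antisymmetry `{{Y,X}}_l` is `-τ {{X,Y}}_r`, so `X •ᵣ Y - Y •ₗ X = m(τ t) - m(t)` with
`t = {{X,Y}}_r ∈ A ⊗ L`; on a pure tensor `a ⊗ ξ` this is `ξ·a - a·ξ ∈ [A,L]`. The second claim is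
the first one rearranged. -/

open TensorProduct MulOpposite

variable (k : Type*) [Field k] [CharZero k]
  (A : Type*) [Ring A] [Algebra k A]
  (L : Type*) [AddCommGroup L] [Module k L]
  [Module A L] [Module Aᵐᵒᵖ L] [SMulCommClass A Aᵐᵒᵖ L]
  [IsScalarTower k A L] [IsScalarTower k Aᵐᵒᵖ L]
  [SMulCommClass k A L] [SMulCommClass k Aᵐᵒᵖ L]

/-- left action of `a ∈ A` on `L`, as a `k`-linear map. -/
noncomputable def lact (a : A) : L →ₗ[k] L where
  toFun x := a • x
  map_add' := smul_add a
  map_smul' c x := (smul_comm c a x).symm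

/-- right action of `a ∈ A` on `L`, as a `k`-linear map. -/
noncomputable def ract (a : A) : L →ₗ[k] L where
  toFun x := op a • x
  map_add' := smul_add (op a)
  map_smul' c x := (smul_comm c (op a) x).symm

/-- `L ⊗ A → L`, `ξ ⊗ a ↦ ξ·a`. -/
noncomputable def ml : L ⊗[k] A →ₗ[k] L :=
  TensorProduct.lift (LinearMap.mk₂ k (fun x a => op a • x)
    (by intros; simp [smul_add]) (by intros; exact (smul_comm _ _ _).symm)
    (by intros; simp [op_add, add_smul]) (by intros; simp [op_smul, smul_assoc]))

/-- `A ⊗ L → L`, `a ⊗ ξ ↦ a·ξ`. -/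
noncomputable def mr : A ⊗[k] L →ₗ[k] L :=
  TensorProduct.lift (LinearMap.mk₂ k (fun a x => a • x)
    (by intros; simp [add_smul]) (by intros; simp [smul_assoc])
    (by intros; simp [smul_add]) (by intros; exact (smul_comm _ _ _).symm))

/-- `{{D₁, -}}_L` applied to the `L`-slot of the `L ⊗ A` component. -/
noncomputable def LAm (bl : L →ₗ[k] L →ₗ[k] L ⊗[k] A) (D : L) :
    L ⊗[k] A →ₗ[k] L ⊗[k] (A ⊗[k] A) :=
  (TensorProduct.assoc k L A A).toLinearMap ∘ₗ LinearMap.rTensor A (bl D)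

/-- `{{D₁, -}}_R` applied to the `L`-slot of the `L ⊗ A` component. -/
noncomputable def Bm (br : L →ₗ[k] L →ₗ[k] A ⊗[k] L) (D : L) :
    L ⊗[k] A →ₗ[k] A ⊗[k] (L ⊗[k] A) :=
  (TensorProduct.assoc k A L A).toLinearMap ∘ₗ LinearMap.rTensor A (br D)

/-- `τ² : A ⊗ L ⊗ A → L ⊗ A ⊗ A`, `a ⊗ ξ ⊗ b ↦ ξ ⊗ b ⊗ a`. -/
noncomputable def ρ31 : A ⊗[k] (L ⊗[k] A) →ₗ[k] L ⊗[k] (A ⊗[k] A) :=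
  (TensorProduct.assoc k L A A).toLinearMap ∘ₗ
    (TensorProduct.comm k A (L ⊗[k] A)).toLinearMap

/-- `τ : L ⊗ A ⊗ A → A ⊗ L ⊗ A`, `ξ ⊗ a ⊗ b ↦ b ⊗ ξ ⊗ a`. -/
noncomputable def ρ12 : L ⊗[k] (A ⊗[k] A) →ₗ[k] A ⊗[k] (L ⊗[k] A) :=
  (TensorProduct.comm k (L ⊗[k] A) A).toLinearMap ∘ₗ
    (TensorProduct.assoc k L A A).symm.toLinearMap

/-- `τ : A ⊗ L ⊗ A → A ⊗ A ⊗ L`, `a ⊗ ξ ⊗ b ↦ b ⊗ a ⊗ ξ`. -/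
noncomputable def ρ23 : A ⊗[k] (L ⊗[k] A) →ₗ[k] A ⊗[k] (A ⊗[k] L) :=
  (TensorProduct.comm k (A ⊗[k] L) A).toLinearMap ∘ₗ
    (TensorProduct.assoc k A L A).symm.toLinearMap

/-- `τ² : L ⊗ A ⊗ A → A ⊗ A ⊗ L`, `ξ ⊗ a ⊗ b ↦ a ⊗ b ⊗ ξ`. -/
noncomputable def ρ13 : L ⊗[k] (A ⊗[k] A) →ₗ[k] A ⊗[k] (A ⊗[k] L) :=
  (TensorProduct.assoc k A A L).toLinearMap ∘ₗ
    (TensorProduct.comm k L (A ⊗[k] A)).toLinearMap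

/-- The subspace `[A,L]` of `L`. -/
def commutatorSpan : Submodule k L :=
  Submodule.span k {x : L | ∃ (a : A) (ξ : L), x = a • ξ - op a • ξ}

omit [CharZero k] [SMulCommClass A Aᵐᵒᵖ L] in
theorem ml_comm_sub_mr_mem_commutatorSpan (t : A ⊗[k] L) :
    ml k A L (TensorProduct.comm k A L t) - mr k A L t ∈ commutatorSpan k A L := by
  induction t using TensorProduct.induction_on with
  | zero => simp
  | tmul a ξ =>
    rw [← neg_sub]
    exact neg_mem (Submodule.subset_span ⟨a, ξ, by simp [ml, mr]⟩)
  | add x y hx hy => simpa only [map_add, add_sub_add_comm] using add_mem hx hy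

theorem double_lie_algebroid_zero_anchor_opposite_products_mod_commutators
    (bl : L →ₗ[k] L →ₗ[k] L ⊗[k] A) (br : L →ₗ[k] L →ₗ[k] A ⊗[k] L)
    (hanti : ∀ D Δ : L, bl D Δ = - (TensorProduct.comm k A L) (br Δ D)) :
    -- `X •ᵣ Y ≡ Y •ₗ X mod [A,L]`
    (∀ X Y : L,
      (- mr k A L (br X Y)) - ml k A L (bl Y X) ∈
        Submodule.span k {x : L | ∃ (a : A) (ξ : L), x = a • ξ - op a • ξ}) ∧
    -- `{X,Y} ≡ X •ₗ Y - Y •ₗ X mod [A,L]`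
    (∀ X Y : L,
      (ml k A L (bl X Y) + mr k A L (br X Y))
        - (ml k A L (bl X Y) - ml k A L (bl Y X)) ∈
        Submodule.span k {x : L | ∃ (a : A) (ξ : L), x = a • ξ - op a • ξ}) := by
  have opposite : ∀ X Y : L, -mr k A L (br X Y) - ml k A L (bl Y X) ∈ commutatorSpan k A L := by
    intro X Y
    rw [hanti, map_neg, sub_neg_eq_add, neg_add_eq_sub]
    exact ml_comm_sub_mr_mem_commutatorSpan k A L (br X Y)
  refine ⟨opposite, fun X Y => ?_⟩
  have bracket_eq : ml k A L (bl X Y) + mr k A L (br X Y) - (ml k A L (bl X Y) - ml k A L (bl Y X))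
      = -(-mr k A L (br X Y) - ml k A L (bl Y X)) := by abel
  exact bracket_eq ▸ neg_mem (opposite X Y)
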